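/- arXiv:2307.10548 — 4 statements merged into one kernel-verified Lean document; each statement's English description precedes it below -/
import Mathlib

section
/- For any graph G and any integer m ≥ Z(G), the positive semidefinite m-propagation time satisfies pt₊(G,m) ≤ ⌈pt(G,m)/2⌉. -/
namespace ZF

variable {V : Type*} [Fintype V] [DecidableEq V]

/-- A valid standard zero forcing force within the vertex set `U`, given blue set `B`:
`u` is blue, `v` is its unique white neighbor in `U`. -/
def ZFValid (G : SimpleGraph V) (U B : Set V) (u v : V) : Prop :=
  u ∈ U ∧ v ∈ U ∧ u ∈ B ∧ v ∉ B ∧ G.Adj u v ∧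
    ∀ w ∈ U, G.Adj u w → w ∉ B → w = v

/-- `whiteConn G U B a b` : `a` and `b` are joined by a walk through white
(non-blue) vertices of `U` (possibly trivial). -/
def whiteConn (G : SimpleGraph V) (U B : Set V) : V → V → Prop :=
  Relation.ReflTransGen (fun a b => G.Adj a b ∧ a ∈ U ∧ b ∈ U ∧ a ∉ B ∧ b ∉ B)

/-- A valid PSD force within the vertex set `U`, given blue set `B`:
`u` is blue and `v` is the unique neighbor of `u` in the component of the
white subgraph containing `v`. -/
def PSDValid (G : SimpleGraph V) (U B : Set V) (u v : V) : Prop :=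
  u ∈ U ∧ v ∈ U ∧ u ∈ B ∧ v ∉ B ∧ G.Adj u v ∧
    ∀ w ∈ U, G.Adj u w → w ∉ B → whiteConn G U B v w → w = v

/-- One propagation step for a generic color change rule `valid`. -/
def step (valid : Set V → V → V → Prop) (B : Set V) : Set V :=
  B ∪ {v | ∃ u, valid B u v}

/-- Iterated propagation. -/
def iter (valid : Set V → V → V → Prop) (B : Set V) : ℕ → Set V :=
  fun k => (step valid)^[k] B

/-- `B ⊆ U` is a forcing set of the induced subgraph on `U` for the rule `valid`. -/
def IsForcingSet (valid : Set V → V → V → Prop) (U B : Set V) : Prop :=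
  B ⊆ U ∧ ∃ k, U ⊆ iter valid B k

/-- Propagation time of the set `B` for rule `valid` on the induced subgraph on `U`. -/
noncomputable def propTime (valid : Set V → V → V → Prop) (U B : Set V) : ℕ :=
  sInf {k | U ⊆ iter valid B k}

/-- Vertices blue after `k` time-steps of the family of forces `F`, starting from `B`. -/
def expand (B : Set V) (F : ℕ → Set (V × V)) : ℕ → Set V
  | 0 => B
  | k + 1 => expand B F k ∪ {v | ∃ u, (u, v) ∈ F (k + 1)}

/-- A relaxed chronology of forces (for the rule `valid`) for the forcing set `B`
on the induced subgraph on `U`, with completion time `K`: at each time-step an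
arbitrary subset of the currently valid forces is performed (no vertex being
forced twice in one step), and all of `U` is blue after step `K`. -/
structure RelaxedChron (valid : Set V → V → V → Prop) (U B : Set V)
    (K : ℕ) (F : ℕ → Set (V × V)) : Prop where
  subset : B ⊆ U
  init : F 0 = ∅
  bound : ∀ k, K < k → F k = ∅
  forcesValid : ∀ k < K, ∀ u v, (u, v) ∈ F (k + 1) → valid (expand B F k) u v
  uniqueForcer : ∀ k u₁ u₂ v, (u₁, v) ∈ F k → (u₂, v) ∈ F k → u₁ = u₂
  complete : U ⊆ expand B F K

/-- The underlying set of forces of a relaxed chronology. -/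
def forcesOf (F : ℕ → Set (V × V)) (K : ℕ) : Set (V × V) :=
  {p | ∃ k, 1 ≤ k ∧ k ≤ K ∧ p ∈ F k}

/-- The terminus of a relaxed chronology: the vertices (of `U`) performing no force. -/
def terminus (U : Set V) (F : ℕ → Set (V × V)) (K : ℕ) : Set V :=
  {v ∈ U | ∀ u, (v, u) ∉ forcesOf F K}

/-- The reversal of a relaxed chronology: each force is reversed and
the order of the time-steps is reversed. -/
def revChron (F : ℕ → Set (V × V)) (K : ℕ) : ℕ → Set (V × V) :=
  fun k => if 1 ≤ k ∧ k ≤ K then {p | (p.2, p.1) ∈ F (K - k + 1)} else ∅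

/-- One round of performing all currently valid forces from the set of forces `S`. -/
def forceStep (valid : Set V → V → V → Prop) (S : Set (V × V)) (B : Set V) : Set V :=
  B ∪ {v | ∃ u, (u, v) ∈ S ∧ valid B u v}

def forceIter (valid : Set V → V → V → Prop) (S : Set (V × V)) (B : Set V) : ℕ → Set V :=
  fun t => (forceStep valid S)^[t] B

/-- Propagation time of a set of forces `S` for starting set `B` on `U`. -/
noncomputable def ptForces (valid : Set V → V → V → Prop) (U : Set V)
    (S : Set (V × V)) (B : Set V) : ℕ :=
  sInf {t | U ⊆ forceIter valid S B t}

/-- `v` is active at time-step `k` of the relaxed chronology `F`: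
it is blue after step `k` and has not yet performed a force. -/
def activeAt (B : Set V) (F : ℕ → Set (V × V)) (v : V) (k : ℕ) : Prop :=
  v ∈ expand B F k ∧ ∀ j ≤ k, ∀ u, (v, u) ∉ F j

/-- The zero forcing number. -/
noncomputable def Z (G : SimpleGraph V) : ℕ :=
  sInf {n | ∃ B : Set V, B.ncard = n ∧ IsForcingSet (ZFValid G Set.univ) Set.univ B}

/-- The PSD forcing number. -/
noncomputable def Zplus (G : SimpleGraph V) : ℕ :=
  sInf {n | ∃ B : Set V, B.ncard = n ∧ IsForcingSet (PSDValid G Set.univ) Set.univ B}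

/-- Standard `m`-propagation time `pt(G,m)`. -/
noncomputable def ptm (G : SimpleGraph V) (m : ℕ) : ℕ :=
  sInf {t | ∃ B : Set V, B.ncard = m ∧ IsForcingSet (ZFValid G Set.univ) Set.univ B ∧
    propTime (ZFValid G Set.univ) Set.univ B = t}

/-- PSD `m`-propagation time `pt₊(G,m)`. -/
noncomputable def ptplusm (G : SimpleGraph V) (m : ℕ) : ℕ :=
  sInf {t | ∃ B : Set V, B.ncard = m ∧ IsForcingSet (PSDValid G Set.univ) Set.univ B ∧
    propTime (PSDValid G Set.univ) Set.univ B = t}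

/-- Standard propagation time `pt(G)`. -/
noncomputable def pt (G : SimpleGraph V) : ℕ := ptm G (Z G)

/-- PSD propagation time `pt₊(G)`. -/
noncomputable def ptplus (G : SimpleGraph V) : ℕ := ptplusm G (Zplus G)

/-- PSD throttling number `thr₊(G)`. -/
noncomputable def thrplus (G : SimpleGraph V) : ℕ :=
  sInf {t | ∃ B : Set V, IsForcingSet (PSDValid G Set.univ) Set.univ B ∧
    t = B.ncard + propTime (PSDValid G Set.univ) Set.univ B}

/-- Closed neighborhood of a set. -/
def closedNbhd (G : SimpleGraph V) (B : Set V) : Set V :=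
  B ∪ {v | ∃ u ∈ B, G.Adj u v}

/-- Power domination process: the first step colors the closed neighborhood,
subsequent steps apply the standard zero forcing rule. -/
def pdIter (G : SimpleGraph V) (B : Set V) : ℕ → Set V
  | 0 => B
  | 1 => closedNbhd G B
  | (k + 2) => step (ZFValid G Set.univ) (pdIter G B (k + 1))

/-- `B` is a power dominating set. -/
def IsPDSet (G : SimpleGraph V) (B : Set V) : Prop :=
  ∃ k, Set.univ ⊆ pdIter G B k

/-- Power propagation time of a set. -/
noncomputable def pdPropTime (G : SimpleGraph V) (B : Set V) : ℕ :=
  sInf {k | Set.univ ⊆ pdIter G B k}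

/-- Power `m`-propagation time `ppt(G,m)`. -/
noncomputable def pptm (G : SimpleGraph V) (m : ℕ) : ℕ :=
  sInf {t | ∃ B : Set V, B.ncard = m ∧ IsPDSet G B ∧ pdPropTime G B = t}

/-- Restriction of a family of forces to those with both endpoints in `W`. -/
def restrictF (F : ℕ → Set (V × V)) (W : Set V) : ℕ → Set (V × V) :=
  fun k => {p ∈ F k | p.1 ∈ W ∧ p.2 ∈ W}

/-- The forcing tree of `b` : all vertices reachable from `b` by a chain of forces in `S`. -/
def treeOf (S : Set (V × V)) (b : V) : Set V :=
  {w | Relation.ReflTransGen (fun a c => (a, c) ∈ S) b w}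

open Classical in
/-- The endpoint, after `k` steps, of the path grown from `b ∈ B` in the
path bundle of the relaxed chronology `F` induced by the vertex `x`: the path is
extended by a force from its current endpoint into the component of white
vertices containing `x`, whenever such a force occurs. -/
noncomputable def lastVert (G : SimpleGraph V) (B : Set V) (F : ℕ → Set (V × V))
    (x : V) (b : V) : ℕ → V
  | 0 => b
  | k + 1 =>
    if h : ∃ w, (lastVert G B F x b k, w) ∈ F (k + 1) ∧ x ∉ expand B F k ∧
        whiteConn G Set.univ (expand B F k) x w
    then h.choose else lastVert G B F x b k

/-- The vertex set of the path bundle of `F` induced by `x`. -/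
def bundle (G : SimpleGraph V) (B : Set V) (F : ℕ → Set (V × V)) (x : V) (K : ℕ) : Set V :=
  {v | ∃ b ∈ B, ∃ j ≤ K, lastVert G B F x b j = v}

/-- The path of the bundle grown from `b`, as a list of vertices. -/
noncomputable def bundlePath (G : SimpleGraph V) (B : Set V) (F : ℕ → Set (V × V))
    (x : V) (K : ℕ) (b : V) : List V :=
  ((List.range (K + 1)).map (lastVert G B F x b)).dedup

/-- A nonempty path in `G`, given as a list of distinct consecutively adjacent vertices. -/
def IsPathList (G : SimpleGraph V) (l : List V) : Prop :=
  l ≠ [] ∧ l.Nodup ∧ l.Chain' G.Adj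

/-- `P` is an `(α,β)`-linkage: a collection of pairwise vertex-disjoint paths,
`α` consisting of one endpoint of each path and `β` of the other endpoints. -/
def IsLinkage (G : SimpleGraph V) (α β : Set V) (P : Set (List V)) : Prop :=
  (∀ l ∈ P, IsPathList G l) ∧
  (∀ l ∈ P, ∀ l' ∈ P, l ≠ l' → ∀ v, v ∈ l → v ∉ l') ∧
  (∀ l ∈ P, ∀ l' ∈ P, l.head? = l'.head? → l = l') ∧
  (∀ l ∈ P, ∀ l' ∈ P, l.getLast? = l'.getLast? → l = l') ∧
  α = {v | ∃ l ∈ P, l.head? = some v} ∧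
  β = {v | ∃ l ∈ P, l.getLast? = some v}

/-- `P` is a rigid linkage: for some `α`, `β` it is the unique `(α,β)`-linkage in `G`. -/
def IsRigidLinkage (G : SimpleGraph V) (P : Set (List V)) : Prop :=
  ∃ α β, IsLinkage G α β P ∧ ∀ P', IsLinkage G α β P' → P' = P

/-- A path cover of `G` : `m` vertex-disjoint induced paths covering all vertices,
the `i`-th path having vertices `vtx i 0, …, vtx i (n i − 1)` in path order. -/
structure IsPathCover (G : SimpleGraph V) (m : ℕ) (n : Fin m → ℕ)
    (vtx : (i : Fin m) → Fin (n i) → V) : Prop where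
  pos : ∀ i, 0 < n i
  inj : Function.Injective (fun p : (i : Fin m) × Fin (n i) => vtx p.1 p.2)
  cover : ∀ v : V, ∃ i j, vtx i j = v
  induced : ∀ i (j j' : Fin (n i)),
    G.Adj (vtx i j) (vtx i j') ↔ ((j : ℕ) + 1 = (j' : ℕ) ∨ (j' : ℕ) + 1 = (j : ℕ))

/-- A witness that a path cover is a parallel increasing path cover: a collection of
block partitions of `{0,…,K}`, one per path, compatible with the edges of `G`. -/
structure IsPIPWitness (G : SimpleGraph V) (m : ℕ) (n : Fin m → ℕ)
    (vtx : (i : Fin m) → Fin (n i) → V) (K : ℕ)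
    (A : (i : Fin m) → Fin (n i) → Finset ℕ) : Prop where
  mem : ∀ i j, A i j ⊆ Finset.range (K + 1)
  nonempty : ∀ i j, (A i j).Nonempty
  partition : ∀ i, ∀ x ∈ Finset.range (K + 1), ∃! j, x ∈ A i j
  mono : ∀ i (j j' : Fin (n i)), (j : ℕ) < (j' : ℕ) → ∀ x ∈ A i j, ∀ y ∈ A i j', x < y
  edge : ∀ (i i' : Fin m) j j', i ≠ i' →
    G.Adj (vtx i j) (vtx i' j') → ((A i j) ∩ (A i' j')).Nonempty

/-- A parallel increasing path cover of `G`. -/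
def IsPIP (G : SimpleGraph V) (m : ℕ) (n : Fin m → ℕ)
    (vtx : (i : Fin m) → Fin (n i) → V) : Prop :=
  IsPathCover G m n vtx ∧ ∃ K A, IsPIPWitness G m n vtx K A

/-- The path cover given by `vtx` is the chain set of the family of forces `F` :
the underlying forces are exactly the consecutive pairs along the paths. -/
def IsChainSetOf (m : ℕ) (n : Fin m → ℕ) (vtx : (i : Fin m) → Fin (n i) → V)
    (F : ℕ → Set (V × V)) (K : ℕ) : Prop :=
  ∀ u w, (u, w) ∈ forcesOf F K ↔
    ∃ (i : Fin m) (j : Fin (n i)) (j' : Fin (n i)),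
      u = vtx i j ∧ w = vtx i j' ∧ (j : ℕ) + 1 = (j' : ℕ)

end ZF

/-!
Let `B` be a standard zero forcing set with propagation time `p`, and `h = ⌈p/2⌉`. The set of
vertices that are blue at time `h` but have not forced by then has the size of `B`, since
forcing matches the forced vertices bijectively with the vertices that have forced. From this
set, PSD forcing replays the first `h` time-steps of a standard chronology backwards and the
remaining `p - h ≤ h` forwards, simultaneously: a vertex that has forced by time `h` has no
neighbor turning blue after `h`, so the white vertices on the two sides of time `h` lie in
different components of the white subgraph, and each replayed force is a valid PSD force.
-/

namespace ZF

open Set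

variable {V : Type*}

section Iteration

variable {valid : Set V → V → V → Prop}

theorem iter_succ (B : Set V) (k : ℕ) : iter valid B (k + 1) = step valid (iter valid B k) :=
  Function.iterate_succ_apply' _ _ _

theorem monotone_iter (B : Set V) : Monotone (iter valid B) :=
  monotone_nat_of_le_succ fun _ => by rw [iter_succ]; exact subset_union_left

def IsMonotoneRule (valid : Set V → V → V → Prop) : Prop :=
  ∀ ⦃A A' : Set V⦄ ⦃u v : V⦄, A ⊆ A' → v ∉ A' → valid A u v → valid A' u v

theorem IsMonotoneRule.step_mono (hvalid : IsMonotoneRule valid) {A A' : Set V}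
    (hA : A ⊆ A') : step valid A ⊆ step valid A' := by
  rintro v (hv | ⟨u, hu⟩)
  · exact Or.inl (hA hv)
  · by_cases hv' : v ∈ A'
    · exact Or.inl hv'
    · exact Or.inr ⟨u, hvalid hA hv' hu⟩

theorem IsMonotoneRule.iter_mono (hvalid : IsMonotoneRule valid) {A A' : Set V}
    (hA : A ⊆ A') (k : ℕ) : iter valid A k ⊆ iter valid A' k := by
  induction k with
  | zero => exact hA
  | succ k ih => rw [iter_succ, iter_succ]; exact hvalid.step_mono ih

end Iteration

variable {G : SimpleGraph V}

theorem isMonotoneRule_zfValid : IsMonotoneRule (ZFValid G univ) :=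
  fun _ _ _ _ hA hv ⟨hu₁, hv₁, hu, _, hadj, huniq⟩ =>
    ⟨hu₁, hv₁, hA hu, hv, hadj, fun w hw hadjw hwA => huniq w hw hadjw (mt (@hA w) hwA)⟩

theorem whiteConn_anti {A A' : Set V} (hA : A ⊆ A') {a b : V}
    (h : whiteConn G univ A' a b) : whiteConn G univ A a b :=
  Relation.ReflTransGen.mono
    (fun _ _ ⟨hadj, hx, hy, hxA, hyA⟩ => ⟨hadj, hx, hy, mt (@hA _) hxA, mt (@hA _) hyA⟩)
    a b h

theorem isMonotoneRule_psdValid : IsMonotoneRule (PSDValid G univ) :=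
  fun _ _ _ _ hA hv ⟨hu₁, hv₁, hu, _, hadj, huniq⟩ =>
    ⟨hu₁, hv₁, hA hu, hv, hadj, fun w hw hadjw hwA hconn =>
      huniq w hw hadjw (mt (@hA w) hwA) (whiteConn_anti hA hconn)⟩

variable {B : Set V}

noncomputable def blueTime (G : SimpleGraph V) (B : Set V) (x : V) : ℕ :=
  sInf {k | x ∈ iter (ZFValid G univ) B k}

open Classical in
/-- A vertex whose standard force turns `x` blue (junk for `x ∈ B`). -/
noncomputable def forcer (G : SimpleGraph V) (B : Set V) (x : V) : V :=
  if h : ∃ u, ZFValid G univ (iter (ZFValid G univ) B (blueTime G B x - 1)) u x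
  then h.choose else x

theorem blueTime_eq_zero_of_mem {b : V} (hb : b ∈ B) : blueTime G B b = 0 :=
  Nat.eq_zero_of_le_zero (Nat.sInf_le hb)

section Forcer

variable (hB : IsForcingSet (ZFValid G univ) univ B)
include hB

theorem mem_iter_iff_blueTime_le {x : V} {k : ℕ} :
    x ∈ iter (ZFValid G univ) B k ↔ blueTime G B x ≤ k := by
  obtain ⟨p, hp⟩ := hB.2
  refine ⟨fun hx => Nat.sInf_le hx, fun hk => monotone_iter B hk ?_⟩
  exact Nat.sInf_mem (s := {k | x ∈ iter (ZFValid G univ) B k}) ⟨p, hp (mem_univ x)⟩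

theorem blueTime_le_propTime (x : V) : blueTime G B x ≤ propTime (ZFValid G univ) univ B :=
  (mem_iter_iff_blueTime_le hB).1 (Nat.sInf_mem hB.2 (mem_univ x))

theorem blueTime_pos {x : V} (hx : x ∉ B) : 0 < blueTime G B x :=
  Nat.pos_of_ne_zero fun h => hx ((mem_iter_iff_blueTime_le hB).2 h.le)

theorem zfValid_forcer {x : V} (hx : x ∉ B) :
    ZFValid G univ (iter (ZFValid G univ) B (blueTime G B x - 1)) (forcer G B x) x := by
  have hpos := blueTime_pos hB hx
  have hblue : x ∈ iter (ZFValid G univ) B (blueTime G B x - 1 + 1) :=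
    (mem_iter_iff_blueTime_le hB).2 (by omega)
  have hwhite : x ∉ iter (ZFValid G univ) B (blueTime G B x - 1) :=
    fun h => by have := (mem_iter_iff_blueTime_le hB).1 h; omega
  rw [iter_succ] at hblue
  obtain hx' | hforce := hblue
  · exact absurd hx' hwhite
  · have hforce : ∃ u, ZFValid G univ (iter (ZFValid G univ) B (blueTime G B x - 1)) u x :=
      hforce
    rw [forcer, dif_pos hforce]
    exact hforce.choose_spec

theorem blueTime_forcer_lt {x : V} (hx : x ∉ B) :
    blueTime G B (forcer G B x) < blueTime G B x := by
  have := (mem_iter_iff_blueTime_le hB).1 (zfValid_forcer hB hx).2.2.1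
  have := blueTime_pos hB hx
  omega

theorem forcer_adj {x : V} (hx : x ∉ B) : G.Adj (forcer G B x) x :=
  (zfValid_forcer hB hx).2.2.2.2.1

theorem eq_of_forcer_adj {x w : V} (hx : x ∉ B) (hadj : G.Adj (forcer G B x) w)
    (hw : blueTime G B x ≤ blueTime G B w) : w = x :=
  (zfValid_forcer hB hx).2.2.2.2.2 w (mem_univ w) hadj
    fun h => by have := (mem_iter_iff_blueTime_le hB).1 h; have := blueTime_pos hB hx; omega

theorem forcer_injOn : InjOn (forcer G B) Bᶜ := by
  intro x hx y hy hxy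
  rcases le_total (blueTime G B x) (blueTime G B y) with h | h
  · exact (eq_of_forcer_adj hB hx (hxy ▸ forcer_adj hB hy) h).symm
  · exact eq_of_forcer_adj hB hy (hxy ▸ forcer_adj hB hx) h

theorem not_adj_forcer {x b : V} {h : ℕ} (hx : x ∉ B) (hxh : blueTime G B x ≤ h)
    (hb : h < blueTime G B b) : ¬ G.Adj (forcer G B x) b := fun hadj => by
  have := eq_of_forcer_adj hB hx hadj (by omega)
  subst this
  omega

end Forcer

/-- The vertices blue after `s` steps of the PSD process started from the vertices that have
not forced by time `h`: the first `h` standard time-steps are replayed backwards (`x` forcing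
`forcer G B x`), and the later ones forwards, simultaneously. -/
def psdBlue (G : SimpleGraph V) (B : Set V) (h s : ℕ) : Set V :=
  {u | blueTime G B u ≤ h ∧
      ∀ x ∉ B, forcer G B x = u → blueTime G B x ≤ h → h < blueTime G B x + s} ∪
    {u | h < blueTime G B u ∧ blueTime G B u ≤ h + s}

theorem psdBlue_zero (h : ℕ) :
    psdBlue G B h 0 =
      {u | blueTime G B u ≤ h} \ forcer G B '' ({u | blueTime G B u ≤ h} \ B) := by
  ext u
  simp only [psdBlue, mem_union, mem_ofPred_eq, mem_sdiff, mem_image, add_zero]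
  constructor
  · rintro (⟨hu, hforced⟩ | ⟨hu, hu'⟩)
    · exact ⟨hu, fun ⟨x, ⟨hxh, hx⟩, hxu⟩ => absurd (hforced x hx hxu hxh) hxh.not_gt⟩
    · omega
  · rintro ⟨hu, hforced⟩
    exact Or.inl ⟨hu, fun x hx hxu hxh => absurd ⟨x, ⟨hxh, hx⟩, hxu⟩ hforced⟩

theorem notMem_psdBlue_cases {h s : ℕ} {u : V} (hu : u ∉ psdBlue G B h s) :
    (blueTime G B u ≤ h ∧ ∃ x ∉ B, forcer G B x = u ∧ blueTime G B x + s ≤ h) ∨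
      h + s < blueTime G B u := by
  simp only [psdBlue, mem_union, mem_ofPred_eq, not_or, not_and, not_forall, not_lt] at hu
  obtain ⟨hlow, hhigh⟩ := hu
  by_cases huh : blueTime G B u ≤ h
  · obtain ⟨x, hx, hxu, -, hxs⟩ := hlow huh
    exact Or.inl ⟨huh, x, hx, hxu, hxs⟩
  · exact Or.inr (by have := hhigh (by omega); omega)

section Replay

variable (hB : IsForcingSet (ZFValid G univ) univ B)
include hB

theorem ncard_psdBlue_zero [Finite V] (h : ℕ) : (psdBlue G B h 0).ncard = B.ncard := by
  set early := {u | blueTime G B u ≤ h}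
  have hBearly : B ⊆ early := fun b hb => (blueTime_eq_zero_of_mem hb).trans_le h.zero_le
  have himage : forcer G B '' (early \ B) ⊆ early := by
    rintro _ ⟨x, ⟨hxh, hx⟩, rfl⟩
    exact (blueTime_forcer_lt hB hx).le.trans hxh
  have hinj : InjOn (forcer G B) (early \ B) :=
    (forcer_injOn hB).mono fun _ hx => hx.2
  rw [psdBlue_zero, ncard_sdiff himage, hinj.ncard_image, ncard_sdiff hBearly]
  have := ncard_le_ncard hBearly
  omega

theorem blueTime_le_iff_of_whiteConn {h s : ℕ} {v w : V}
    (hconn : whiteConn G univ (psdBlue G B h s) v w) :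
    blueTime G B v ≤ h ↔ blueTime G B w ≤ h := by
  -- a white vertex blue by time `h` has forced by then, so no neighbor of it turns blue later
  have not_adj {a b : V} (ha : a ∉ psdBlue G B h s) (hah : blueTime G B a ≤ h)
      (hbh : h < blueTime G B b) : ¬ G.Adj a b := by
    obtain ⟨-, x, hx, rfl, hxh⟩ | ha := notMem_psdBlue_cases ha
    · exact not_adj_forcer hB hx (by omega) hbh
    · omega
  induction hconn with
  | refl => rfl
  | tail _ hbc ih =>
    obtain ⟨hadj, -, -, hb, hc⟩ := hbc
    refine ih.trans ⟨fun hbh => ?_, fun hch => ?_⟩ <;> by_contra hlt <;> push Not at hlt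
    · exact not_adj hb hbh hlt hadj
    · exact not_adj hc hch hlt hadj.symm

theorem psdValid_reverse_force {h s : ℕ} {x : V} (hx : x ∉ B) (hxs : blueTime G B x + s = h) :
    PSDValid G univ (psdBlue G B h s) x (forcer G B x) := by
  have hlt := blueTime_forcer_lt hB hx
  refine ⟨mem_univ _, mem_univ _, ?_, ?_, (forcer_adj hB hx).symm, ?_⟩
  · refine Or.inl ⟨by omega, fun y hy hyx _ => ?_⟩
    have := hyx ▸ blueTime_forcer_lt hB hy
    omega
  · rintro (⟨-, hforced⟩ | ⟨hlt', -⟩)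
    · have := hforced x hx rfl (by omega)
      omega
    · omega
  · intro w _ hadj hw hconn
    have hwh := (blueTime_le_iff_of_whiteConn hB hconn).1 (by omega)
    obtain ⟨-, y, hy, rfl, hys⟩ | hw := notMem_psdBlue_cases hw
    · rw [eq_of_forcer_adj hB hy hadj.symm (by omega)]
    · omega

theorem psdValid_forward_force {h s : ℕ} {v : V} (hv : v ∉ B)
    (hvt : blueTime G B v = h + s + 1) :
    PSDValid G univ (psdBlue G B h s) (forcer G B v) v := by
  have hlt := blueTime_forcer_lt hB hv
  refine ⟨mem_univ _, mem_univ _, ?_, ?_, forcer_adj hB hv, ?_⟩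
  · by_cases hfh : blueTime G B (forcer G B v) ≤ h
    · refine Or.inl ⟨hfh, fun x hx hxv hxh => ?_⟩
      rw [forcer_injOn hB hx hv hxv] at hxh
      omega
    · exact Or.inr ⟨by omega, by omega⟩
  · rintro (⟨hvh, -⟩ | ⟨-, hvh⟩) <;> omega
  · intro w _ hadj hw hconn
    have hwh := mt (blueTime_le_iff_of_whiteConn hB hconn).2 (by omega)
    obtain ⟨hw', -⟩ | hw := notMem_psdBlue_cases hw
    · exact absurd hw' hwh
    · exact eq_of_forcer_adj hB hv hadj (by omega)

theorem psdBlue_succ_subset (h s : ℕ) :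
    psdBlue G B h (s + 1) ⊆ step (PSDValid G univ) (psdBlue G B h s) := by
  intro v hv
  by_cases hvs : v ∈ psdBlue G B h s
  · exact Or.inl hvs
  refine Or.inr ?_
  obtain ⟨hvh, x, hx, rfl, hxs⟩ | hvs := notMem_psdBlue_cases hvs
  · obtain ⟨-, hforced⟩ | ⟨hlt, -⟩ := hv
    · exact ⟨x, psdValid_reverse_force hB hx (by have := hforced x hx rfl (by omega); omega)⟩
    · omega
  · have hv' : blueTime G B v ≤ h + s + 1 := by
      obtain ⟨hle, -⟩ | ⟨-, hle⟩ := hv <;> omega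
    have hvB : v ∉ B := fun hvB => by rw [blueTime_eq_zero_of_mem hvB] at hvs; omega
    exact ⟨forcer G B v, psdValid_forward_force hB hvB (by omega)⟩

theorem psdBlue_subset_iter (h s : ℕ) :
    psdBlue G B h s ⊆ iter (PSDValid G univ) (psdBlue G B h 0) s := by
  induction s with
  | zero => exact subset_rfl
  | succ s ih =>
    rw [iter_succ]
    exact (psdBlue_succ_subset hB h s).trans (isMonotoneRule_psdValid.step_mono ih)

theorem psdBlue_eq_univ {h : ℕ} (hh : propTime (ZFValid G univ) univ B ≤ 2 * h) :
    psdBlue G B h h = univ := by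
  refine eq_univ_of_forall fun u => ?_
  by_cases hu : blueTime G B u ≤ h
  · exact Or.inl ⟨hu, fun x hx _ _ => by have := blueTime_pos hB hx; omega⟩
  · exact Or.inr ⟨by omega, by have := blueTime_le_propTime hB u; omega⟩

theorem exists_psdForcingSet [Finite V] :
    ∃ B' : Set V, B'.ncard = B.ncard ∧ IsForcingSet (PSDValid G univ) univ B' ∧
      propTime (PSDValid G univ) univ B' ≤ (propTime (ZFValid G univ) univ B + 1) / 2 := by
  set h := (propTime (ZFValid G univ) univ B + 1) / 2
  have hcover : univ ⊆ iter (PSDValid G univ) (psdBlue G B h 0) h :=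
    (psdBlue_eq_univ hB (by omega)).symm.subset.trans (psdBlue_subset_iter hB h h)
  exact ⟨psdBlue G B h 0, ncard_psdBlue_zero hB h, ⟨subset_univ _, h, hcover⟩,
    Nat.sInf_le hcover⟩

end Replay

theorem exists_zfForcingSet_ncard_eq [Finite V] {m : ℕ} (hm : Z G ≤ m)
    (hmV : m ≤ Nat.card V) :
    ∃ B : Set V, B.ncard = m ∧ IsForcingSet (ZFValid G univ) univ B := by
  obtain ⟨B₀, hB₀, -, k, hk⟩ : ∃ B₀ : Set V, B₀.ncard = Z G ∧
      IsForcingSet (ZFValid G univ) univ B₀ :=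
    Nat.sInf_mem (s := {n | ∃ B : Set V, B.ncard = n ∧ IsForcingSet (ZFValid G univ) univ B})
      ⟨_, univ, rfl, subset_univ _, 0, subset_rfl⟩
  obtain ⟨B, hB₀B, -, hBm⟩ :=
    exists_subsuperset_card_eq (subset_univ B₀) (hB₀ ▸ hm) (by rwa [ncard_univ])
  exact ⟨B, hBm, subset_univ _, k, hk.trans (isMonotoneRule_zfValid.iter_mono hB₀B k)⟩

theorem exists_propTime_eq_ptm [Finite V] {m : ℕ} (hm : Z G ≤ m) (hmV : m ≤ Nat.card V) :
    ∃ B : Set V, B.ncard = m ∧ IsForcingSet (ZFValid G univ) univ B ∧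
      propTime (ZFValid G univ) univ B = ptm G m := by
  obtain ⟨B, hBm, hB⟩ := exists_zfForcingSet_ncard_eq hm hmV
  exact Nat.sInf_mem (s := {t | ∃ B : Set V, B.ncard = m ∧
    IsForcingSet (ZFValid G univ) univ B ∧ propTime (ZFValid G univ) univ B = t})
    ⟨_, B, hBm, hB, rfl⟩

theorem ptplusm_eq_zero_of_card_lt [Finite V] {m : ℕ} (hmV : Nat.card V < m) :
    ptplusm G m = 0 :=
  Nat.sInf_eq_zero.2 <| Or.inr <| eq_empty_of_forall_notMem fun _ ⟨B, hBm, _⟩ =>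
    (hBm ▸ ncard_le_card B).not_gt hmV

end ZF

theorem ptplusm_le_general {V : Type*} [Fintype V] (G : SimpleGraph V)
    (m : ℕ) (hm : ZF.Z G ≤ m) :
    ZF.ptplusm G m ≤ (ZF.ptm G m + 1) / 2 := by
  rcases le_or_gt m (Nat.card V) with hmV | hmV
  · obtain ⟨B, hBm, hB, hBt⟩ := ZF.exists_propTime_eq_ptm hm hmV
    obtain ⟨B', hB'm, hB', hB't⟩ := ZF.exists_psdForcingSet hB
    calc ZF.ptplusm G m ≤ ZF.propTime (ZF.PSDValid G Set.univ) Set.univ B' :=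
          Nat.sInf_le ⟨B', hB'm.trans hBm, hB', rfl⟩
      _ ≤ (ZF.ptm G m + 1) / 2 := hBt ▸ hB't
  · rw [ZF.ptplusm_eq_zero_of_card_lt hmV]
    exact Nat.zero_le _

/-- For any graph `G` and `m ≥ Z(G)`, `pt₊(G,m) ≤ ⌈pt(G,m)/2⌉`. -/
theorem ptplusm_le {V : Type*} [Fintype V] [DecidableEq V] (G : SimpleGraph V)
    (m : ℕ) (hm : ZF.Z G ≤ m) :
    ZF.ptplusm G m ≤ (ZF.ptm G m + 1) / 2 :=
  ptplusm_le_general G m hm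
end

section
/- For any graph G and any integer m ≥ Z(G), the power propagation time satisfies ppt(G,m) ≤ ⌈pt(G,m)/2⌉. -/
section PPTAux

set_option linter.unusedSectionVars false

open ZF Set

variable {V : Type*} [Fintype V] [DecidableEq V]

namespace PPT

variable (G : SimpleGraph V) (B : Set V)

lemma iter_zero : ZF.iter (ZF.ZFValid G Set.univ) B 0 = B := rfl

lemma iter_succ (k : ℕ) :
    ZF.iter (ZF.ZFValid G Set.univ) B (k + 1) =
      ZF.step (ZF.ZFValid G Set.univ) (ZF.iter (ZF.ZFValid G Set.univ) B k) := by
  simp [ZF.iter, Function.iterate_succ_apply']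

lemma subset_step (X : Set V) : X ⊆ ZF.step (ZF.ZFValid G Set.univ) X :=
  Set.subset_union_left

lemma iter_mono_right {k l : ℕ} (h : k ≤ l) :
    ZF.iter (ZF.ZFValid G Set.univ) B k ⊆ ZF.iter (ZF.ZFValid G Set.univ) B l := by
  induction l with
  | zero =>
    have : k = 0 := Nat.le_zero.mp h
    subst this; exact subset_rfl
  | succ l ih =>
    rcases Nat.lt_or_ge k (l + 1) with h' | h'
    · refine (ih (Nat.lt_succ_iff.mp h')).trans ?_
      rw [iter_succ]; exact subset_step ..
    · have : k = l + 1 := le_antisymm h h'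
      subst this; exact subset_rfl

lemma step_mono {X Y : Set V} (h : X ⊆ Y) :
    ZF.step (ZF.ZFValid G Set.univ) X ⊆ ZF.step (ZF.ZFValid G Set.univ) Y := by
  intro v hv
  rcases hv with hv | ⟨u, _, _, huX, hvX, hadj, huniq⟩
  · exact Or.inl (h hv)
  · by_cases hvY : v ∈ Y
    · exact Or.inl hvY
    · exact Or.inr ⟨u, Set.mem_univ u, Set.mem_univ v, h huX, hvY, hadj,
        fun w _ hw hwY => huniq w (Set.mem_univ w) hw (fun hwX => hwY (h hwX))⟩

lemma iter_mono_left {X Y : Set V} (h : X ⊆ Y) (k : ℕ) :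
    ZF.iter (ZF.ZFValid G Set.univ) X k ⊆ ZF.iter (ZF.ZFValid G Set.univ) Y k := by
  induction k with
  | zero => exact h
  | succ k ih => rw [iter_succ, iter_succ]; exact step_mono G ih

/-- The time at which `x` turns blue. -/
noncomputable def tau (x : V) : ℕ := sInf {k | x ∈ ZF.iter (ZF.ZFValid G Set.univ) B k}

variable {t : ℕ}

lemma mem_iter_tau (hB : Set.univ ⊆ ZF.iter (ZF.ZFValid G Set.univ) B t) (x : V) :
    x ∈ ZF.iter (ZF.ZFValid G Set.univ) B (tau G B x) := by
  have h : {k | x ∈ ZF.iter (ZF.ZFValid G Set.univ) B k}.Nonempty := ⟨t, hB (Set.mem_univ x)⟩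
  exact Nat.sInf_mem h

lemma tau_le {x : V} {k : ℕ} (h : x ∈ ZF.iter (ZF.ZFValid G Set.univ) B k) :
    tau G B x ≤ k := Nat.sInf_le h

lemma mem_iter_iff (hB : Set.univ ⊆ ZF.iter (ZF.ZFValid G Set.univ) B t) {x : V} {k : ℕ} :
    x ∈ ZF.iter (ZF.ZFValid G Set.univ) B k ↔ tau G B x ≤ k :=
  ⟨tau_le G B, fun h => iter_mono_right G B h (mem_iter_tau G B hB x)⟩

lemma tau_le_t (hB : Set.univ ⊆ ZF.iter (ZF.ZFValid G Set.univ) B t) (x : V) :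
    tau G B x ≤ t := tau_le G B (hB (Set.mem_univ x))

lemma tau_eq_zero {b : V} (hb : b ∈ B) : tau G B b = 0 :=
  Nat.le_zero.mp (tau_le G B (by rw [iter_zero]; exact hb))

lemma mem_B_of_tau_eq_zero (hB : Set.univ ⊆ ZF.iter (ZF.ZFValid G Set.univ) B t)
    {b : V} (hb : tau G B b = 0) : b ∈ B := by
  have := mem_iter_tau G B hB b
  rwa [hb, iter_zero] at this

open Classical in
/-- The forcer of `x` (junk if `x ∈ B`). -/
noncomputable def gg (x : V) : V :=
  if h : ∃ u, ZF.ZFValid G Set.univ (ZF.iter (ZF.ZFValid G Set.univ) B (tau G B x - 1)) u x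
  then h.choose else x

lemma gg_spec (hB : Set.univ ⊆ ZF.iter (ZF.ZFValid G Set.univ) B t) {x : V}
    (hx : 1 ≤ tau G B x) :
    ZF.ZFValid G Set.univ (ZF.iter (ZF.ZFValid G Set.univ) B (tau G B x - 1)) (gg G B x) x := by
  have h1 : x ∈ ZF.iter (ZF.ZFValid G Set.univ) B (tau G B x) := mem_iter_tau G B hB x
  have h2 : x ∉ ZF.iter (ZF.ZFValid G Set.univ) B (tau G B x - 1) := by
    intro hmem
    have := tau_le G B hmem
    omega
  have h3 : tau G B x = (tau G B x - 1) + 1 := by omega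
  rw [h3, iter_succ] at h1
  rcases h1 with h1 | ⟨u, hu⟩
  · exact absurd h1 h2
  · have h : ∃ u, ZF.ZFValid G Set.univ
        (ZF.iter (ZF.ZFValid G Set.univ) B (tau G B x - 1)) u x := ⟨u, hu⟩
    rw [gg, dif_pos h]
    exact h.choose_spec


/-- `x` forces `y`. -/
def Forces (x y : V) : Prop := 1 ≤ tau G B y ∧ gg G B y = x

lemma forces_adj (hB : Set.univ ⊆ ZF.iter (ZF.ZFValid G Set.univ) B t) {x y : V}
    (h : Forces G B x y) : G.Adj x y := by
  have := (gg_spec G B hB h.1).2.2.2.2.1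
  rwa [h.2] at this

lemma forces_tau_lt (hB : Set.univ ⊆ ZF.iter (ZF.ZFValid G Set.univ) B t) {x y : V}
    (h : Forces G B x y) : tau G B x < tau G B y := by
  have hmem := (gg_spec G B hB h.1).2.2.1
  rw [h.2] at hmem
  have := tau_le G B hmem
  have := h.1
  omega

/-- The key validity fact: any neighbor of the forcer of `y` which is still white
at the time `y` is forced must be `y` itself. -/
lemma forces_resolve (hB : Set.univ ⊆ ZF.iter (ZF.ZFValid G Set.univ) B t) {x y w : V}
    (h : Forces G B x y) (hadj : G.Adj x w) (hw : tau G B y ≤ tau G B w) : w = y := by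
  have hspec := gg_spec G B hB h.1
  rw [h.2] at hspec
  refine hspec.2.2.2.2.2 w (Set.mem_univ w) hadj ?_
  intro hmem
  have := tau_le G B hmem
  have := h.1
  omega

lemma forces_unique_target (hB : Set.univ ⊆ ZF.iter (ZF.ZFValid G Set.univ) B t)
    {x y y' : V} (h : Forces G B x y) (h' : Forces G B x y') : y = y' := by
  rcases le_total (tau G B y) (tau G B y') with hle | hle
  · exact (forces_resolve G B hB h (forces_adj G B hB h') hle).symm
  · exact forces_resolve G B hB h' (forces_adj G B hB h) hle

lemma forces_unique_forcer {x x' y : V} (h : Forces G B x y) (h' : Forces G B x' y) :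
    x = x' := h.2 ▸ h'.2 ▸ rfl

variable (s : ℕ)

open Classical in
/-- Follow the forcing chain one step, as long as the target is forced by time `s`. -/
noncomputable def ff (x : V) : V :=
  if h : ∃ y, Forces G B x y ∧ tau G B y ≤ s then h.choose else x

/-- The set of vertices active at time `s` (blue, not yet having forced): the frontier. -/
def Act : Set V := {x | tau G B x ≤ s ∧ ∀ y, Forces G B x y → s < tau G B y}

lemma ff_eq (hB : Set.univ ⊆ ZF.iter (ZF.ZFValid G Set.univ) B t) {x y : V}
    (h : Forces G B x y) (hy : tau G B y ≤ s) : ff G B s x = y := by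
  have hex : ∃ y, Forces G B x y ∧ tau G B y ≤ s := ⟨y, h, hy⟩
  rw [ff, dif_pos hex]
  exact forces_unique_target G B hB hex.choose_spec.1 h

lemma ff_cases (x : V) :
    ff G B s x = x ∨ (Forces G B x (ff G B s x) ∧ tau G B (ff G B s x) ≤ s) := by
  by_cases hex : ∃ y, Forces G B x y ∧ tau G B y ≤ s
  · right; rw [ff, dif_pos hex]; exact hex.choose_spec
  · left; rw [ff, dif_neg hex]

lemma mem_act_iff (hB : Set.univ ⊆ ZF.iter (ZF.ZFValid G Set.univ) B t) {x : V} :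
    x ∈ Act G B s ↔ tau G B x ≤ s ∧ ff G B s x = x := by
  constructor
  · rintro ⟨h1, h2⟩
    refine ⟨h1, ?_⟩
    rcases ff_cases G B s x with h | ⟨hf, hle⟩
    · exact h
    · exact absurd (h2 _ hf) (by omega)
  · rintro ⟨h1, h2⟩
    refine ⟨h1, fun y hy => ?_⟩
    by_contra hs
    push_neg at hs
    have hxy := ff_eq G B s hB hy hs
    rw [h2] at hxy
    have hlt := forces_tau_lt G B hB hy
    rw [hxy] at hlt
    omega

lemma ff_tau_le (hB : Set.univ ⊆ ZF.iter (ZF.ZFValid G Set.univ) B t) {x : V}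
    (hx : tau G B x ≤ s) : tau G B (ff G B s x) ≤ s := by
  rcases ff_cases G B s x with h | ⟨_, hle⟩
  · rwa [h]
  · exact hle

lemma iterate_tau_le (hB : Set.univ ⊆ ZF.iter (ZF.ZFValid G Set.univ) B t) {x : V}
    (hx : tau G B x ≤ s) (j : ℕ) : tau G B ((ff G B s)^[j] x) ≤ s := by
  induction j with
  | zero => exact hx
  | succ j ih => rw [Function.iterate_succ_apply']; exact ff_tau_le G B s hB ih

/-- The chain map: follow the chain for `s+1` steps, reaching the frontier. -/
noncomputable def phi (x : V) : V := (ff G B s)^[s + 1] x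

lemma phi_mem_act (hB : Set.univ ⊆ ZF.iter (ZF.ZFValid G Set.univ) B t) {x : V}
    (hx : tau G B x ≤ s) : phi G B s x ∈ Act G B s := by
  have key : ∀ n : ℕ, ff G B s ((ff G B s)^[n] x) = (ff G B s)^[n] x ∨
      n ≤ tau G B ((ff G B s)^[n] x) := by
    intro n
    induction n with
    | zero => right; exact Nat.zero_le _
    | succ n ih =>
      rcases ih with ih | ih
      · left
        rw [Function.iterate_succ_apply', ih, ih]
      · rcases ff_cases G B s ((ff G B s)^[n] x) with h | ⟨hf, _⟩
        · left; rw [Function.iterate_succ_apply', h, h]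
        · right
          rw [Function.iterate_succ_apply']
          have := forces_tau_lt G B hB hf
          omega
  rcases key (s + 1) with h | h
  · exact (mem_act_iff G B s hB).mpr ⟨iterate_tau_le G B s hB hx _, h⟩
  · exact absurd (iterate_tau_le G B s hB hx (s + 1)) (by omega)

lemma reach (hB : Set.univ ⊆ ZF.iter (ZF.ZFValid G Set.univ) B t) :
    ∀ n x, tau G B x = n → n ≤ s → ∃ b ∈ B, ∃ j, j ≤ n ∧ (ff G B s)^[j] b = x := by
  intro n
  induction n using Nat.strong_induction_on with
  | _ n ih =>
    intro x hx hns
    rcases Nat.eq_zero_or_pos n with hn0 | hn1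
    · subst hn0
      exact ⟨x, mem_B_of_tau_eq_zero G B hB hx, 0, le_rfl, rfl⟩
    · have hF : Forces G B (gg G B x) x := ⟨by omega, rfl⟩
      have hlt : tau G B (gg G B x) < n := hx ▸ forces_tau_lt G B hB hF
      obtain ⟨b, hb, j, hj, hjb⟩ := ih _ hlt (gg G B x) rfl (by omega)
      refine ⟨b, hb, j + 1, by omega, ?_⟩
      rw [Function.iterate_succ_apply', hjb]
      exact ff_eq G B s hB hF (by omega)

lemma act_eq_phi_image (hB : Set.univ ⊆ ZF.iter (ZF.ZFValid G Set.univ) B t) :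
    Act G B s = phi G B s '' B := by
  ext x
  constructor
  · intro hx
    obtain ⟨b, hb, j, hj, hjb⟩ := reach G B s hB (tau G B x) x rfl hx.1
    refine ⟨b, hb, ?_⟩
    have hfix := ((mem_act_iff G B s hB).mp hx).2
    have hjle : j ≤ s + 1 := by have := hx.1; omega
    rw [phi, show s + 1 = (s + 1 - j) + j by omega, Function.iterate_add_apply, hjb]
    exact Function.iterate_fixed hfix _
  · rintro ⟨b, hb, rfl⟩
    exact phi_mem_act G B s hB (by rw [tau_eq_zero G B hb]; exact Nat.zero_le _)

lemma phi_injOn (hB : Set.univ ⊆ ZF.iter (ZF.ZFValid G Set.univ) B t) :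
    Set.InjOn (phi G B s) B := by
  have key : ∀ N j k (b b' : V), j + k ≤ N → b ∈ B → b' ∈ B →
      (ff G B s)^[j] b = (ff G B s)^[k] b' → b = b' := by
    intro N
    induction N with
    | zero =>
      intro j k b b' hN _ _ h
      have hj : j = 0 := by omega
      have hk : k = 0 := by omega
      subst hj; subst hk; exact h
    | succ N ih =>
      intro j k b b' hN hb hb' h
      match j, k, h with
      | 0, 0, h => exact h
      | 0, k + 1, h =>
        rw [Function.iterate_succ_apply'] at h
        simp only [Function.iterate_zero_apply] at h
        rcases ff_cases G B s ((ff G B s)^[k] b') with hfix | ⟨hf, _⟩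
        · rw [hfix] at h
          exact ih 0 k b b' (by omega) hb hb' h
        · rw [← h] at hf
          have := forces_tau_lt G B hB hf
          rw [tau_eq_zero G B hb] at this
          omega
      | j + 1, 0, h =>
        rw [Function.iterate_succ_apply'] at h
        simp only [Function.iterate_zero_apply] at h
        rcases ff_cases G B s ((ff G B s)^[j] b) with hfix | ⟨hf, _⟩
        · rw [hfix] at h
          exact ih j 0 b b' (by omega) hb hb' h
        · rw [h] at hf
          have := forces_tau_lt G B hB hf
          rw [tau_eq_zero G B hb'] at this
          omega
      | j + 1, k + 1, h =>
        rw [Function.iterate_succ_apply', Function.iterate_succ_apply'] at h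
        rcases ff_cases G B s ((ff G B s)^[j] b) with hfixj | ⟨hfj, _⟩
        · rw [hfixj] at h
          exact ih j (k + 1) b b' (by omega) hb hb'
            (by rw [Function.iterate_succ_apply']; exact h)
        · rcases ff_cases G B s ((ff G B s)^[k] b') with hfixk | ⟨hfk, _⟩
          · rw [hfixk] at h
            exact ih (j + 1) k b b' (by omega) hb hb'
              (by rw [Function.iterate_succ_apply']; exact h)
          · rw [h] at hfj
            have := forces_unique_forcer G B hfj hfk
            exact ih j k b b' (by omega) hb hb' this
  intro b hb b' hb' h
  exact key (2 * (s + 1)) (s + 1) (s + 1) b b' (by omega) hb hb' h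

lemma act_ncard (hB : Set.univ ⊆ ZF.iter (ZF.ZFValid G Set.univ) B t) :
    (Act G B s).ncard = B.ncard := by
  rw [act_eq_phi_image G B s hB]
  exact Set.ncard_image_of_injOn (phi_injOn G B s hB)

/-- The schedule: vertices guaranteed blue after `k` steps of the power domination
process started at the frontier `Act G B s`. -/
def NN (k : ℕ) : Set V :=
  ZF.closedNbhd G (Act G B s) ∪ {x | s < tau G B x ∧ tau G B x ≤ s + k}
    ∪ {x | ∃ y, Forces G B x y ∧ tau G B y ≤ s ∧ s + 1 ≤ k + tau G B y}

lemma act_of_forces_high (hB : Set.univ ⊆ ZF.iter (ZF.ZFValid G Set.univ) B t) {u x : V}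
    (hu : tau G B u ≤ s) (hF : Forces G B u x) (hx : s < tau G B x) : u ∈ Act G B s := by
  refine ⟨hu, fun y hy => ?_⟩
  have h := forces_unique_target G B hB hF hy
  rw [← h]
  exact hx

lemma third_or_act (hB : Set.univ ⊆ ZF.iter (ZF.ZFValid G Set.univ) B t) {y : V}
    (hy : tau G B y ≤ s) : y ∈ Act G B s ∨
      ∃ y₂, Forces G B y y₂ ∧ tau G B y₂ ≤ s ∧ tau G B y < tau G B y₂ := by
  by_cases hA : y ∈ Act G B s
  · exact Or.inl hA
  · simp only [Act, Set.mem_setOf_eq, not_and, not_forall, not_lt] at hA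
    obtain ⟨y₂, hF2, hle2⟩ := hA hy
    exact Or.inr ⟨y₂, hF2, hle2, forces_tau_lt G B hB hF2⟩

lemma NN_one_subset (hB : Set.univ ⊆ ZF.iter (ZF.ZFValid G Set.univ) B t) :
    NN G B s 1 ⊆ ZF.closedNbhd G (Act G B s) := by
  rintro x ((hx | hx) | hx)
  · exact hx
  · obtain ⟨hs1, hs2⟩ := hx
    have hF : Forces G B (gg G B x) x := ⟨by omega, rfl⟩
    have hu : tau G B (gg G B x) ≤ s := by
      have := forces_tau_lt G B hB hF; omega
    exact Or.inr ⟨gg G B x, act_of_forces_high G B s hB hu hF hs1, forces_adj G B hB hF⟩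
  · obtain ⟨y, hF, hyle, hge⟩ := hx
    have hys : s ≤ tau G B y := by omega
    have hyAct : y ∈ Act G B s := by
      refine ⟨hyle, fun y₂ h₂ => ?_⟩
      have := forces_tau_lt G B hB h₂
      omega
    exact Or.inr ⟨y, hyAct, (forces_adj G B hB hF).symm⟩

lemma NN_step (hB : Set.univ ⊆ ZF.iter (ZF.ZFValid G Set.univ) B t) (k : ℕ) {Y : Set V}
    (hY : NN G B s (k + 1) ⊆ Y) :
    NN G B s (k + 2) ⊆ ZF.step (ZF.ZFValid G Set.univ) Y := by
  intro x hx
  by_cases hxY : x ∈ Y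
  · exact Or.inl hxY
  have hActY : ∀ z, z ∈ ZF.closedNbhd G (Act G B s) → z ∈ Y :=
    fun z hz => hY (Or.inl (Or.inl hz))
  have hsecY : ∀ z, s < tau G B z → tau G B z ≤ s + (k + 1) → z ∈ Y :=
    fun z h1 h2 => hY (Or.inl (Or.inr ⟨h1, h2⟩))
  have hthdY : ∀ z y, Forces G B z y → tau G B y ≤ s → s + 1 ≤ (k + 1) + tau G B y → z ∈ Y :=
    fun z y h1 h2 h3 => hY (Or.inr ⟨y, h1, h2, h3⟩)
  rcases hx with (hx | hx) | hx
  · exact absurd (hActY x hx) hxY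
  · -- forward case: `x` forced at time `s + (k+2)`
    obtain ⟨hs1, hs2⟩ := hx
    have htx : tau G B x = s + (k + 2) := by
      rcases Nat.lt_or_ge (tau G B x) (s + (k + 2)) with h | h
      · exact absurd (hsecY x hs1 (by omega)) hxY
      · omega
    have hF : Forces G B (gg G B x) x := ⟨by omega, rfl⟩
    have hgu : tau G B (gg G B x) < tau G B x := forces_tau_lt G B hB hF
    have huY : gg G B x ∈ Y := by
      rcases Nat.lt_or_ge s (tau G B (gg G B x)) with h | h
      · exact hsecY _ h (by omega)
      · exact hActY _ (Or.inl (act_of_forces_high G B s hB h hF hs1))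
    refine Or.inr ⟨gg G B x, Set.mem_univ _, Set.mem_univ x, huY, hxY,
      forces_adj G B hB hF, ?_⟩
    intro w _ hadj hwY
    rcases Nat.lt_or_ge (tau G B w) (tau G B x) with hlt | hge
    swap
    · exact forces_resolve G B hB hF hadj hge
    · exfalso; apply hwY
      rcases Nat.lt_or_ge s (tau G B w) with h1 | h1
      · exact hsecY w h1 (by omega)
      · rcases Nat.lt_or_ge s (tau G B (gg G B x)) with h2 | h2
        · -- the forcer is above the frontier: `w` must be active
          refine hActY w (Or.inl ⟨h1, fun y₀ h₀ => ?_⟩)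
          by_contra hy0
          push_neg at hy0
          have heq : gg G B x = y₀ :=
            forces_resolve G B hB h₀ hadj.symm (hy0.trans h2.le)
          rw [← heq] at hy0
          omega
        · -- the forcer is the frontier: `w` is dominated
          exact hActY w (Or.inr ⟨gg G B x, act_of_forces_high G B s hB h2 hF hs1, hadj⟩)
  · -- backward case: reverse force along the chain
    obtain ⟨y, hF, hyle, hge⟩ := hx
    have hty : tau G B y + (k + 1) = s := by
      rcases Nat.lt_or_ge s (tau G B y + (k + 1)) with h | h
      · exact absurd (hthdY x y hF hyle (by omega)) hxY
      · omega
    have hy1 : 1 ≤ tau G B y := hF.1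
    rcases third_or_act G B s hB hyle with hyA | ⟨y₂, hF2, h2le, h2lt⟩
    · -- `y` active: then `x` is dominated, contradiction
      exact absurd (hActY x (Or.inr ⟨y, hyA, (forces_adj G B hB hF).symm⟩)) hxY
    · have hyY : y ∈ Y := hthdY y y₂ hF2 h2le (by omega)
      refine Or.inr ⟨y, Set.mem_univ y, Set.mem_univ x, hyY, hxY,
        (forces_adj G B hB hF).symm, ?_⟩
      intro w _ hadj hwY
      rcases Nat.lt_or_ge (tau G B w) (tau G B y₂) with hlt | hge2
      swap
      · -- `w = y₂`, but `y₂` is already blue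
        have hw2 : w = y₂ := forces_resolve G B hB hF2 hadj hge2
        exfalso; apply hwY; rw [hw2]
        rcases third_or_act G B s hB h2le with h2A | ⟨y₃, hF3, h3le, h3lt⟩
        · exact hActY y₂ (Or.inl h2A)
        · exact hthdY y₂ y₃ hF3 h3le (by omega)
      · have hws : tau G B w ≤ s := by omega
        rcases third_or_act G B s hB hws with hwA | ⟨w₂, hFw, hwle, hwlt⟩
        · exact absurd (hActY w (Or.inl hwA)) hwY
        · rcases Nat.lt_or_ge (tau G B y) (tau G B w₂) with hc | hc
          · exact absurd (hthdY w w₂ hFw hwle (by omega)) hwY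
          · have hyw : y = w₂ := forces_resolve G B hB hFw hadj.symm hc
            rw [← hyw] at hFw
            exact forces_unique_forcer G B hFw hF

lemma NN_subset_pdIter (hB : Set.univ ⊆ ZF.iter (ZF.ZFValid G Set.univ) B t) :
    ∀ k, NN G B s (k + 1) ⊆ ZF.pdIter G (Act G B s) (k + 1) := by
  intro k
  induction k with
  | zero =>
    have h1 : ZF.pdIter G (Act G B s) 1 = ZF.closedNbhd G (Act G B s) := rfl
    rw [h1]
    exact NN_one_subset G B s hB
  | succ k ih =>
    have hstep : ZF.pdIter G (Act G B s) (k + 2) =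
        ZF.step (ZF.ZFValid G Set.univ) (ZF.pdIter G (Act G B s) (k + 1)) := rfl
    rw [hstep]
    exact NN_step G B s hB k ih

lemma univ_subset_NN (hB : Set.univ ⊆ ZF.iter (ZF.ZFValid G Set.univ) B t)
    (hts : t ≤ 2 * s) : Set.univ ⊆ NN G B s s := by
  intro x _
  rcases Nat.lt_or_ge s (tau G B x) with h | h
  · exact Or.inl (Or.inr ⟨h, by have := tau_le_t G B hB x; omega⟩)
  · rcases third_or_act G B s hB h with hA | ⟨y, hF, hyle, _⟩
    · exact Or.inl (Or.inl (Or.inl hA))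
    · exact Or.inr ⟨y, hF, hyle, by have := hF.1; omega⟩

end PPT

end PPTAux

/-- For any graph `G` and `m ≥ Z(G)`, the power propagation time satisfies
`ppt(G,m) ≤ ⌈pt(G,m)/2⌉`. -/
theorem pptm_le {V : Type*} [Fintype V] [DecidableEq V] (G : SimpleGraph V)
    (m : ℕ) (hm : ZF.Z G ≤ m) :
    ZF.pptm G m ≤ (ZF.ptm G m + 1) / 2 := by
  classical
  by_cases hcard : m ≤ Fintype.card V
  swap
  · -- no set of size `m` exists at all: the infimum is over the empty set
    have hempty : {t | ∃ B : Set V, B.ncard = m ∧ ZF.IsPDSet G B ∧ ZF.pdPropTime G B = t}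
        = ∅ := by
      ext k
      simp only [Set.mem_setOf_eq, Set.mem_empty_iff_false, iff_false, not_exists]
      rintro B ⟨hBm, -⟩
      have h1 : B.ncard ≤ (Set.univ : Set V).ncard :=
        Set.ncard_le_ncard (Set.subset_univ B) Set.finite_univ
      rw [Set.ncard_univ, Nat.card_eq_fintype_card] at h1
      omega
    rw [ZF.pptm, hempty, Nat.sInf_empty]
    exact Nat.zero_le _
  -- the zero forcing number is attained
  have hZmem : ZF.Z G ∈ {n | ∃ B : Set V, B.ncard = n ∧
      ZF.IsForcingSet (ZF.ZFValid G Set.univ) Set.univ B} := by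
    apply Nat.sInf_mem
    exact ⟨(Set.univ : Set V).ncard, Set.univ, rfl, subset_rfl, 0, by rw [PPT.iter_zero]⟩
  obtain ⟨B₀, hB₀card, hB₀force⟩ := hZmem
  -- extend to a forcing set of size exactly `m`
  obtain ⟨B₁, hsub, -, hB₁card⟩ :=
    Set.exists_subsuperset_card_eq (Set.subset_univ B₀) (by omega : B₀.ncard ≤ m)
      (by rw [Set.ncard_univ, Nat.card_eq_fintype_card]; exact hcard)
  have hB₁force : ZF.IsForcingSet (ZF.ZFValid G Set.univ) Set.univ B₁ := by
    obtain ⟨-, k, hk⟩ := hB₀force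
    exact ⟨Set.subset_univ _, k, hk.trans (PPT.iter_mono_left G hsub k)⟩
  -- the `m`-propagation time is attained by some forcing set `B`
  have hptm : ZF.ptm G m ∈ {t | ∃ B : Set V, B.ncard = m ∧
      ZF.IsForcingSet (ZF.ZFValid G Set.univ) Set.univ B ∧
      ZF.propTime (ZF.ZFValid G Set.univ) Set.univ B = t} :=
    Nat.sInf_mem ⟨_, B₁, hB₁card, hB₁force, rfl⟩
  obtain ⟨B, hBcard, hBforce, hBprop⟩ := hptm
  set t := ZF.ptm G m with htdef
  have hBt : Set.univ ⊆ ZF.iter (ZF.ZFValid G Set.univ) B t := by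
    have hne : {k | Set.univ ⊆ ZF.iter (ZF.ZFValid G Set.univ) B k}.Nonempty := hBforce.2
    have hmem := Nat.sInf_mem hne
    simp only [ZF.propTime] at hBprop
    rw [hBprop] at hmem
    exact hmem
  by_cases ht0 : t = 0
  · -- trivial case: everything is blue at time 0
    have huniv : Set.univ ⊆ ZF.pdIter G B 0 := by
      rw [ht0] at hBt
      exact hBt
    have hpd : ZF.pdPropTime G B = 0 :=
      Nat.le_zero.mp (Nat.sInf_le (show (0 : ℕ) ∈ {k | Set.univ ⊆ ZF.pdIter G B k} from huniv))
    have hle : ZF.pptm G m ≤ 0 :=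
      Nat.sInf_le (show (0 : ℕ) ∈ {t | ∃ B' : Set V, B'.ncard = m ∧ ZF.IsPDSet G B' ∧
        ZF.pdPropTime G B' = t} from ⟨B, hBcard, ⟨0, huniv⟩, hpd⟩)
    exact hle.trans (Nat.zero_le _)
  · -- main construction: start power domination from the frontier at time `s`
    set s := (t + 1) / 2 with hs
    have hs1 : 1 ≤ s := by omega
    have hts : t ≤ 2 * s := by omega
    set Bp := PPT.Act G B s with hBp
    have hBpcard : Bp.ncard = m := by
      rw [hBp, PPT.act_ncard G B s hBt, hBcard]
    have hcover : Set.univ ⊆ ZF.pdIter G Bp s := by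
      have h1 := PPT.univ_subset_NN G B s hBt hts
      have h2 := PPT.NN_subset_pdIter G B s hBt (s - 1)
      rw [show s - 1 + 1 = s by omega] at h2
      exact h1.trans h2
    have hPD : ZF.IsPDSet G Bp := ⟨s, hcover⟩
    have hpdle : ZF.pdPropTime G Bp ≤ s :=
      Nat.sInf_le (show s ∈ {k | Set.univ ⊆ ZF.pdIter G Bp k} from hcover)
    have hfinal : ZF.pptm G m ≤ ZF.pdPropTime G Bp :=
      Nat.sInf_le ⟨Bp, hBpcard, hPD, rfl⟩
    exact hfinal.trans hpdle
end

section
/- Let H be an induced subgraph of G, let B be a standard zero forcing set of G, and let F be a relaxed chronology of standard forces of B on G with chain set C. If B' is the set of initial vertices of the forcing subpaths of C in H, then B' is a standard zero forcing set of H, F restricted to H is a relaxed chronology of standard forces for B' on H, and pt(H, F|_H) ≤ pt(G, F). -/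
section Aux
open ZF
variable {V : Type*} [Fintype V] [DecidableEq V]

lemma ZFaux_expand_mono (B : Set V) (F : ℕ → Set (V × V)) {k l : ℕ} (h : k ≤ l) :
    ZF.expand B F k ⊆ ZF.expand B F l := by
  induction l, h using Nat.le_induction with
  | base => exact subset_rfl
  | succ l h ih => exact ih.trans Set.subset_union_left

lemma ZFaux_iter_mono (valid : Set V → V → V → Prop) (B : Set V) {k l : ℕ} (h : k ≤ l) :
    ZF.iter valid B k ⊆ ZF.iter valid B l := by
  induction l, h using Nat.le_induction with
  | base => exact subset_rfl
  | succ l h ih =>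
    refine ih.trans ?_
    show ZF.iter valid B l ⊆ ZF.iter valid B (l + 1)
    unfold ZF.iter
    rw [Function.iterate_succ_apply']
    exact Set.subset_union_left

lemma ZFaux_forceIter_mono (valid : Set V → V → V → Prop) (S : Set (V × V)) (B : Set V)
    {k l : ℕ} (h : k ≤ l) : ZF.forceIter valid S B k ⊆ ZF.forceIter valid S B l := by
  induction l, h using Nat.le_induction with
  | base => exact subset_rfl
  | succ l h ih =>
    refine ih.trans ?_
    show ZF.forceIter valid S B l ⊆ ZF.forceIter valid S B (l + 1)
    unfold ZF.forceIter
    rw [Function.iterate_succ_apply']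
    exact Set.subset_union_left

end Aux
/-- Restriction of a relaxed chronology of standard forces to an induced subgraph on `W`:
the set `B'` of initial vertices of the forcing subpaths in `W` is a standard zero forcing
set of `G[W]`, the restriction of `F` is a relaxed chronology of standard forces for `B'`
on `G[W]`, and its propagation time is at most that of `F` on `G`. -/
theorem zf_restrict {V : Type*} [Fintype V] [DecidableEq V]
    (G : SimpleGraph V) (W B : Set V) (K : ℕ) (F : ℕ → Set (V × V))
    (hB : ZF.IsForcingSet (ZF.ZFValid G Set.univ) Set.univ B)
    (hF : ZF.RelaxedChron (ZF.ZFValid G Set.univ) Set.univ B K F) :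
    ZF.IsForcingSet (ZF.ZFValid G W) W
        {v ∈ W | v ∈ B ∨ ∃ u, (u, v) ∈ ZF.forcesOf F K ∧ u ∉ W} ∧
    ZF.RelaxedChron (ZF.ZFValid G W) W
        {v ∈ W | v ∈ B ∨ ∃ u, (u, v) ∈ ZF.forcesOf F K ∧ u ∉ W} K (ZF.restrictF F W) ∧
    ZF.ptForces (ZF.ZFValid G W) W (ZF.forcesOf (ZF.restrictF F W) K)
        {v ∈ W | v ∈ B ∨ ∃ u, (u, v) ∈ ZF.forcesOf F K ∧ u ∉ W}
      ≤ ZF.ptForces (ZF.ZFValid G Set.univ) Set.univ (ZF.forcesOf F K) B := by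
  classical
  have hstep_lt : ∀ k u v, (u, v) ∈ F (k + 1) → k < K := by
    intro k u v h
    by_contra hk
    push_neg at hk
    rw [hF.bound (k + 1) (by omega)] at h
    exact h
  have hvalid : ∀ k u v, (u, v) ∈ F (k + 1) →
      ZF.ZFValid G Set.univ (ZF.expand B F k) u v := by
    intro k u v h
    exact hF.forcesValid k (hstep_lt k u v h) u v h
  have hmemforces : ∀ k u v, (u, v) ∈ F (k + 1) → (u, v) ∈ ZF.forcesOf F K := by
    intro k u v h
    exact ⟨k + 1, by omega, by have := hstep_lt k u v h; omega, h⟩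
  have hforced_blue : ∀ k u v, (u, v) ∈ F (k + 1) → v ∈ ZF.expand B F (k + 1) := by
    intro k u v h
    exact Or.inr ⟨u, h⟩
  have hBsub : ∀ k, B ⊆ ZF.expand B F k := fun k =>
    ZFaux_expand_mono (k := 0) B F (Nat.zero_le k)
  set B' : Set V := {v ∈ W | v ∈ B ∨ ∃ u, (u, v) ∈ ZF.forcesOf F K ∧ u ∉ W} with hB'def
  set F' : ℕ → Set (V × V) := ZF.restrictF F W with hF'def
  have hF'sub : ∀ k, F' k ⊆ F k := fun k p hp => hp.1
  have hB'W : B' ⊆ W := fun v hv => hv.1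
  have hB'exp : ∀ k, B' ⊆ ZF.expand B' F' k := fun k =>
    ZFaux_expand_mono (k := 0) B' F' (Nat.zero_le k)
  -- expand B F k ∩ W ⊆ expand B' F' k
  have hsub1 : ∀ k, ZF.expand B F k ∩ W ⊆ ZF.expand B' F' k := by
    intro k
    induction k with
    | zero =>
      rintro v ⟨hv, hvW⟩
      exact ⟨hvW, Or.inl hv⟩
    | succ k ih =>
      rintro v ⟨hv, hvW⟩
      rcases hv with hv | ⟨u, hu⟩
      · exact Or.inl (ih ⟨hv, hvW⟩)
      · by_cases huW : u ∈ W
        · refine Or.inr ⟨u, ?_⟩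
          have hval := hvalid k u v hu
          exact ⟨hu, huW, hvW⟩
        · exact hB'exp (k + 1) ⟨hvW, Or.inr ⟨u, hmemforces k u v hu, huW⟩⟩
  -- expand B' F' k ⊆ (expand B F k ∩ W) ∪ B'
  have hsub2 : ∀ k, ZF.expand B' F' k ⊆ (ZF.expand B F k ∩ W) ∪ B' := by
    intro k
    induction k with
    | zero => exact fun v hv => Or.inr hv
    | succ k ih =>
      rintro v (hv | ⟨u, hu⟩)
      · rcases ih hv with ⟨h1, h2⟩ | h
        · exact Or.inl ⟨ZFaux_expand_mono B F (Nat.le_succ k) h1, h2⟩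
        · exact Or.inr h
      · obtain ⟨huF, huW, hvW⟩ := hu
        exact Or.inl ⟨hforced_blue k u v huF, hvW⟩
  -- the relaxed chronology
  have hRC : ZF.RelaxedChron (ZF.ZFValid G W) W B' K F' := by
    refine ⟨hB'W, ?_, ?_, ?_, ?_, ?_⟩
    · ext p
      simp [hF'def, ZF.restrictF, hF.init]
    · intro k hk
      ext p
      simp [hF'def, ZF.restrictF, hF.bound k hk]
    · intro k hk u v hu
      obtain ⟨huF, huW, hvW⟩ := hu
      have hval := hvalid k u v huF
      refine ⟨huW, hvW, hsub1 k ⟨hval.2.2.1, huW⟩, ?_, hval.2.2.2.2.1, ?_⟩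
      · -- v not blue in the restricted process
        intro hv
        rcases hsub2 k hv with ⟨h1, _⟩ | hvB'
        · exact hval.2.2.2.1 h1
        · rcases hvB'.2 with hvB | ⟨u', hu'F, hu'W⟩
          · exact hval.2.2.2.1 (hBsub k hvB)
          · obtain ⟨j, hj1, hjK, hj⟩ := hu'F
            obtain ⟨k', rfl⟩ : ∃ k', j = k' + 1 := ⟨j - 1, by omega⟩
            have hval' := hvalid k' u' v hj
            rcases lt_trichotomy (k' + 1) (k + 1) with h | h | h
            · exact hval.2.2.2.1
                (ZFaux_expand_mono B F (by omega : k' + 1 ≤ k) (hforced_blue k' u' v hj))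
            · have hk'k : k' = k := by omega
              have heq : u' = u := hF.uniqueForcer (k + 1) u' u v (hk'k ▸ hj) huF
              rw [heq] at hu'W
              exact hu'W huW
            · exact hval'.2.2.2.1
                (ZFaux_expand_mono B F (by omega : k + 1 ≤ k') (hforced_blue k u v huF))
      · intro w hwW hadj hw
        refine hval.2.2.2.2.2 w (Set.mem_univ w) hadj ?_
        intro hwblue
        exact hw (hsub1 k ⟨hwblue, hwW⟩)
    · intro k u₁ u₂ v h1 h2
      exact hF.uniqueForcer k u₁ u₂ v (hF'sub k h1) (hF'sub k h2)
    · intro v hvW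
      exact hsub1 K ⟨hF.complete (Set.mem_univ v), hvW⟩
  -- forcing set: expand B' F' k ⊆ iter
  have hexp_iter : ∀ k, ZF.expand B' F' k ⊆ ZF.iter (ZF.ZFValid G W) B' k := by
    intro k
    induction k with
    | zero => exact subset_rfl
    | succ k ih =>
      rintro v (hv | ⟨u, hu⟩)
      · exact ZFaux_iter_mono _ _ (Nat.le_succ k) (ih hv)
      · have hk : k < K := hstep_lt k u v (hF'sub (k + 1) hu)
        have hval := hRC.forcesValid k hk u v hu
        by_cases hviter : v ∈ ZF.iter (ZF.ZFValid G W) B' k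
        · exact ZFaux_iter_mono _ _ (Nat.le_succ k) hviter
        · show v ∈ ZF.iter (ZF.ZFValid G W) B' (k + 1)
          unfold ZF.iter
          rw [Function.iterate_succ_apply']
          refine Or.inr ⟨u, hval.1, hval.2.1, ih hval.2.2.1, hviter, hval.2.2.2.2.1, ?_⟩
          intro w hwW hadj hw
          exact hval.2.2.2.2.2 w hwW hadj fun hmem => hw (ih hmem)
  -- propagation time comparison
  set SG := ZF.forcesOf F K with hSG
  set SW := ZF.forcesOf F' K with hSW
  set Φ := ZF.forceIter (ZF.ZFValid G Set.univ) SG B with hΦ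
  set Ψ := ZF.forceIter (ZF.ZFValid G W) SW B' with hΨ
  have hΦsucc : ∀ t, Φ (t + 1) = ZF.forceStep (ZF.ZFValid G Set.univ) SG (Φ t) := by
    intro t
    simp only [hΦ, ZF.forceIter, Function.iterate_succ_apply']
  have hΨsucc : ∀ t, Ψ (t + 1) = ZF.forceStep (ZF.ZFValid G W) SW (Ψ t) := by
    intro t
    simp only [hΨ, ZF.forceIter, Function.iterate_succ_apply']
  have hexpΦ : ∀ k, ZF.expand B F k ⊆ Φ k := by
    intro k
    induction k with
    | zero => exact subset_rfl
    | succ k ih =>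
      rintro v (hv | ⟨u, hu⟩)
      · exact ZFaux_forceIter_mono _ _ _ (Nat.le_succ k) (ih hv)
      · have hval := hvalid k u v hu
        by_cases hvΦ : v ∈ Φ k
        · exact ZFaux_forceIter_mono _ _ _ (Nat.le_succ k) hvΦ
        · rw [hΦsucc k]
          refine Or.inr ⟨u, hmemforces k u v hu,
            Set.mem_univ u, Set.mem_univ v, ih hval.2.2.1, hvΦ, hval.2.2.2.2.1, ?_⟩
          intro w hwW hadj hw
          exact hval.2.2.2.2.2 w hwW hadj fun hmem => hw (ih hmem)
  have hkey : ∀ t, Φ t ∩ W ⊆ Ψ t := by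
    intro t
    induction t with
    | zero => rintro v ⟨hv, hvW⟩; exact ⟨hvW, Or.inl hv⟩
    | succ t ih =>
      rintro v ⟨hv, hvW⟩
      rw [hΦsucc t] at hv
      rcases hv with hv | ⟨u, huS, hval⟩
      · exact ZFaux_forceIter_mono _ _ _ (Nat.le_succ t) (ih ⟨hv, hvW⟩)
      · by_cases huW : u ∈ W
        · have huS' : (u, v) ∈ SW := by
            obtain ⟨j, hj1, hjK, hj⟩ := huS
            exact ⟨j, hj1, hjK, hj, huW, hvW⟩
          by_cases hvΨ : v ∈ Ψ t
          · exact ZFaux_forceIter_mono _ _ _ (Nat.le_succ t) hvΨ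
          · rw [hΨsucc t]
            refine Or.inr ⟨u, huS', huW, hvW, ih ⟨hval.2.2.1, huW⟩, hvΨ,
              hval.2.2.2.2.1, ?_⟩
            intro w hwW hadj hw
            refine hval.2.2.2.2.2 w (Set.mem_univ w) hadj ?_
            intro hwΦ
            exact hw (ih ⟨hwΦ, hwW⟩)
        · have hvB' : v ∈ B' := ⟨hvW, Or.inr ⟨u, huS, huW⟩⟩
          exact ZFaux_forceIter_mono _ _ _ (Nat.zero_le (t + 1)) hvB'
  refine ⟨⟨hB'W, K, fun v hv => hexp_iter K (hRC.complete hv)⟩, hRC, ?_⟩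
  have hne : Set.univ ⊆ Φ K := hF.complete.trans (hexpΦ K)
  have hmem := Nat.sInf_mem (⟨K, hne⟩ : Set.Nonempty {t | Set.univ ⊆ Φ t})
  refine Nat.sInf_le ?_
  intro v hvW
  exact hkey _ ⟨hmem (Set.mem_univ v), hvW⟩
end

section
/- Let G be a graph, B a PSD forcing set of G, F a relaxed chronology of PSD forces of B on G with forcing tree cover T. Then for each time-step k, for each component C of G minus the set of vertices blue after step k, and for each forcing tree T ∈ T, there is at most one blue vertex v ∈ V(T) having a white neighbor in C. -/
/-!
Walk the two forcing chains from `b` down to their last common vertex `r`. If one of `v₁`,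
`v₂` is `r` itself, then `r` forced a child `x` whose subtree reaches the common white component;
if not, `r` forced two distinct children `x₁`, `x₂` whose subtrees both reach it. Every vertex of
the subtree of a vertex `x` forced at time `s + 1` is white at time `s` and lies in the white
component of `x` at that time, and so does every neighbour of it that is still white once it
is blue. Hence, at the time of
the (earlier) force out of `r`, the component of the forced vertex contained a second neighbour of
`r`, so that force was not a valid PSD force.
-/

theorem Relation.ReflTransGen.eq_or_fork {α : Type*} {r : α → α → Prop} {a b c : α}
    (hb : Relation.ReflTransGen r a b) (hc : Relation.ReflTransGen r a c) :
    b = c ∨ (∃ x, r b x ∧ Relation.ReflTransGen r x c) ∨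
      (∃ x, r c x ∧ Relation.ReflTransGen r x b) ∨
      ∃ p x y, x ≠ y ∧ r p x ∧ r p y ∧
        Relation.ReflTransGen r x b ∧ Relation.ReflTransGen r y c := by
  induction hb using Relation.ReflTransGen.head_induction_on generalizing c with
  | refl =>
    rcases hc.cases_head with rfl | ⟨x, hbx, hxc⟩
    · exact Or.inl rfl
    · exact Or.inr (Or.inl ⟨x, hbx, hxc⟩)
  | @head a x hax hxb ih =>
    rcases hc.cases_head with rfl | ⟨y, hay, hyc⟩
    · exact Or.inr (Or.inr (Or.inl ⟨x, hax, hxb⟩))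
    · by_cases hxy : x = y
      · subst hxy
        exact ih hyc
      · exact Or.inr (Or.inr (Or.inr ⟨a, x, y, hxy, hax, hay, hxb, hyc⟩))

namespace ZF

variable {V : Type*}

theorem expand_mono {B : Set V} {F : ℕ → Set (V × V)} : Monotone (expand B F) :=
  monotone_nat_of_le_succ fun _ => Set.subset_union_left

theorem mem_expand_succ {B : Set V} {F : ℕ → Set (V × V)} {u v : V} {s : ℕ}
    (h : (u, v) ∈ F (s + 1)) : v ∈ expand B F (s + 1) :=
  Or.inr ⟨u, h⟩

theorem exists_succ_of_mem_forcesOf {F : ℕ → Set (V × V)} {K : ℕ} {p : V × V}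
    (h : p ∈ forcesOf F K) : ∃ s, p ∈ F (s + 1) := by
  obtain ⟨t, ht, -, hp⟩ := h
  exact ⟨t - 1, by rwa [Nat.sub_add_cancel ht]⟩

section whiteConn

variable {G : SimpleGraph V} {U E E' : Set V} {a b : V}

theorem whiteConn_symm (h : whiteConn G U E a b) : whiteConn G U E b a := by
  induction h with
  | refl => exact .refl
  | tail _ hcd ih =>
    obtain ⟨hadj, hc, hd, hcE, hdE⟩ := hcd
    exact ih.head ⟨hadj.symm, hd, hc, hdE, hcE⟩

theorem whiteConn_anti_s13 (hE : E ⊆ E') (h : whiteConn G U E' a b) : whiteConn G U E a b :=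
  Relation.ReflTransGen.mono
    (fun _ _ ⟨hadj, hc, hd, hcE, hdE⟩ => ⟨hadj, hc, hd, fun h => hcE (hE h), fun h => hdE (hE h)⟩)
    a b h

end whiteConn

theorem RelaxedChron.valid_of_mem {valid : Set V → V → V → Prop} {U B : Set V} {K : ℕ}
    {F : ℕ → Set (V × V)} (hF : RelaxedChron valid U B K F) {u v : V} {s : ℕ}
    (h : (u, v) ∈ F (s + 1)) : valid (expand B F s) u v := by
  by_cases hs : s < K
  · exact hF.forcesValid s hs u v h
  · rw [hF.bound (s + 1) (by omega)] at h
    exact h.elim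

section PSD

variable {G : SimpleGraph V} {B : Set V} {K : ℕ} {F : ℕ → Set (V × V)}

theorem RelaxedChron.whiteConn_of_mem_treeOf
    (hF : RelaxedChron (PSDValid G Set.univ) Set.univ B K F) {u x v : V} {s : ℕ}
    (hx : (u, x) ∈ F (s + 1)) (hv : v ∈ treeOf (forcesOf F K) x) :
    v ∉ expand B F s ∧ whiteConn G Set.univ (expand B F s) x v := by
  induction hv with
  | refl => exact ⟨(hF.valid_of_mem hx).2.2.2.1, .refl⟩
  | @tail y v _ hyv ih =>
    obtain ⟨hys, hxy⟩ := ih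
    obtain ⟨t, hyv⟩ := exists_succ_of_mem_forcesOf hyv
    obtain ⟨-, -, hyt, hvt, hadj, -⟩ := hF.valid_of_mem hyv
    have hst : s ≤ t := le_of_not_ge fun hts => hys (expand_mono hts hyt)
    have hvs : v ∉ expand B F s := fun h => hvt (expand_mono hst h)
    exact ⟨hvs, hxy.tail ⟨hadj, trivial, trivial, hys, hvs⟩⟩

theorem RelaxedChron.whiteConn_of_adj_of_mem_treeOf
    (hF : RelaxedChron (PSDValid G Set.univ) Set.univ B K F) {u x v w : V} {s k : ℕ}
    (hx : (u, x) ∈ F (s + 1)) (hv : v ∈ treeOf (forcesOf F K) x)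
    (hvk : v ∈ expand B F k) (hwk : w ∉ expand B F k) (hvw : G.Adj v w) :
    s < k ∧ whiteConn G Set.univ (expand B F s) x w := by
  obtain ⟨hvs, hxv⟩ := hF.whiteConn_of_mem_treeOf hx hv
  have hsk : s < k := lt_of_not_ge fun hks => hvs (expand_mono hks hvk)
  exact ⟨hsk, hxv.tail ⟨hvw, trivial, trivial, hvs, fun h => hwk (expand_mono hsk.le h)⟩⟩

theorem RelaxedChron.not_whiteConn_of_forces_of_mem_treeOf
    (hF : RelaxedChron (PSDValid G Set.univ) Set.univ B K F) {r x v w₁ w₂ : V} {k : ℕ}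
    (hx : (r, x) ∈ forcesOf F K) (hv : v ∈ treeOf (forcesOf F K) x)
    (hvk : v ∈ expand B F k) (hw₁ : w₁ ∉ expand B F k) (hw₂ : w₂ ∉ expand B F k)
    (hrw : G.Adj r w₁) (hvw : G.Adj v w₂) :
    ¬ whiteConn G Set.univ (expand B F k) w₁ w₂ := by
  intro hconn
  obtain ⟨s, hx⟩ := exists_succ_of_mem_forcesOf hx
  obtain ⟨hsk, hxw₂⟩ := hF.whiteConn_of_adj_of_mem_treeOf hx hv hvk hw₂ hvw
  have hw₁s : w₁ ∉ expand B F s := fun h => hw₁ (expand_mono hsk.le h)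
  have hxw₁ := hxw₂.trans (whiteConn_symm (whiteConn_anti_s13 (expand_mono hsk.le) hconn))
  have hw₁x : w₁ = x := (hF.valid_of_mem hx).2.2.2.2.2 w₁ trivial hrw hw₁s hxw₁
  exact hw₁ (hw₁x ▸ expand_mono hsk (mem_expand_succ hx))

theorem RelaxedChron.eq_of_forces_of_whiteConn_of_le
    (hF : RelaxedChron (PSDValid G Set.univ) Set.univ B K F)
    {r x₁ x₂ v₁ v₂ w₁ w₂ : V} {s₁ s₂ k : ℕ}
    (hx₁ : (r, x₁) ∈ F (s₁ + 1)) (hx₂ : (r, x₂) ∈ F (s₂ + 1)) (hs : s₁ ≤ s₂)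
    (hv₁ : v₁ ∈ treeOf (forcesOf F K) x₁) (hv₂ : v₂ ∈ treeOf (forcesOf F K) x₂)
    (hv₁k : v₁ ∈ expand B F k) (hv₂k : v₂ ∈ expand B F k)
    (hw₁ : w₁ ∉ expand B F k) (hw₂ : w₂ ∉ expand B F k)
    (hvw₁ : G.Adj v₁ w₁) (hvw₂ : G.Adj v₂ w₂)
    (hconn : whiteConn G Set.univ (expand B F k) w₁ w₂) : x₁ = x₂ := by
  obtain ⟨-, hxw₁⟩ := hF.whiteConn_of_adj_of_mem_treeOf hx₁ hv₁ hv₁k hw₁ hvw₁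
  obtain ⟨hs₂k, hxw₂⟩ := hF.whiteConn_of_adj_of_mem_treeOf hx₂ hv₂ hv₂k hw₂ hvw₂
  have hx₁x₂ : whiteConn G Set.univ (expand B F s₁) x₁ x₂ :=
    hxw₁.trans <| (whiteConn_anti_s13 (expand_mono (by omega)) hconn).trans <|
      whiteConn_symm (whiteConn_anti_s13 (expand_mono hs) hxw₂)
  obtain ⟨-, -, -, hx₂s, hrx₂, -⟩ := hF.valid_of_mem hx₂
  exact ((hF.valid_of_mem hx₁).2.2.2.2.2 x₂ trivial hrx₂
    (fun h => hx₂s (expand_mono hs h)) hx₁x₂).symm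

theorem RelaxedChron.eq_of_forces_of_whiteConn
    (hF : RelaxedChron (PSDValid G Set.univ) Set.univ B K F)
    {r x₁ x₂ v₁ v₂ w₁ w₂ : V} {k : ℕ}
    (hx₁ : (r, x₁) ∈ forcesOf F K) (hx₂ : (r, x₂) ∈ forcesOf F K)
    (hv₁ : v₁ ∈ treeOf (forcesOf F K) x₁) (hv₂ : v₂ ∈ treeOf (forcesOf F K) x₂)
    (hv₁k : v₁ ∈ expand B F k) (hv₂k : v₂ ∈ expand B F k)
    (hw₁ : w₁ ∉ expand B F k) (hw₂ : w₂ ∉ expand B F k)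
    (hvw₁ : G.Adj v₁ w₁) (hvw₂ : G.Adj v₂ w₂)
    (hconn : whiteConn G Set.univ (expand B F k) w₁ w₂) : x₁ = x₂ := by
  obtain ⟨s₁, hx₁⟩ := exists_succ_of_mem_forcesOf hx₁
  obtain ⟨s₂, hx₂⟩ := exists_succ_of_mem_forcesOf hx₂
  rcases le_total s₁ s₂ with hs | hs
  · exact hF.eq_of_forces_of_whiteConn_of_le hx₁ hx₂ hs hv₁ hv₂ hv₁k hv₂k hw₁ hw₂ hvw₁ hvw₂ hconn
  · exact (hF.eq_of_forces_of_whiteConn_of_le hx₂ hx₁ hs hv₂ hv₁ hv₂k hv₁k hw₂ hw₁ hvw₂ hvw₁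
      (whiteConn_symm hconn)).symm

end PSD

end ZF

theorem psd_tree_unique_forcer_general {V : Type*}
    (G : SimpleGraph V) (B : Set V) (K : ℕ) (F : ℕ → Set (V × V))
    (hF : ZF.RelaxedChron (ZF.PSDValid G Set.univ) Set.univ B K F)
    (k : ℕ) (b : V) (v₁ v₂ w₁ w₂ : V)
    (h₁ : v₁ ∈ ZF.treeOf (ZF.forcesOf F K) b) (h₂ : v₂ ∈ ZF.treeOf (ZF.forcesOf F K) b)
    (hb₁ : v₁ ∈ ZF.expand B F k) (hb₂ : v₂ ∈ ZF.expand B F k)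
    (hw₁ : w₁ ∉ ZF.expand B F k) (hw₂ : w₂ ∉ ZF.expand B F k)
    (ha₁ : G.Adj v₁ w₁) (ha₂ : G.Adj v₂ w₂)
    (hconn : ZF.whiteConn G Set.univ (ZF.expand B F k) w₁ w₂) :
    v₁ = v₂ := by
  rcases Relation.ReflTransGen.eq_or_fork h₁ h₂ with
    h | ⟨x, hx, hv₂⟩ | ⟨x, hx, hv₁⟩ | ⟨r, x₁, x₂, hne, hx₁, hx₂, hv₁, hv₂⟩
  · exact h
  · exact (hF.not_whiteConn_of_forces_of_mem_treeOf hx hv₂ hb₂ hw₁ hw₂ ha₁ ha₂ hconn).elim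
  · exact (hF.not_whiteConn_of_forces_of_mem_treeOf hx hv₁ hb₁ hw₂ hw₁ ha₂ ha₁
      (ZF.whiteConn_symm hconn)).elim
  · exact (hne (hF.eq_of_forces_of_whiteConn hx₁ hx₂ hv₁ hv₂ hb₁ hb₂ hw₁ hw₂ ha₁ ha₂ hconn)).elim

/-- For a relaxed chronology of PSD forces, at each time-step, for each component of the
white subgraph and each forcing tree, at most one blue vertex of that tree has a white
neighbor in that component. -/
theorem psd_tree_unique_forcer {V : Type*} [Fintype V] [DecidableEq V]
    (G : SimpleGraph V) (B : Set V) (K : ℕ) (F : ℕ → Set (V × V))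
    (hB : ZF.IsForcingSet (ZF.PSDValid G Set.univ) Set.univ B)
    (hF : ZF.RelaxedChron (ZF.PSDValid G Set.univ) Set.univ B K F)
    (k : ℕ) (b : V) (hb : b ∈ B) (v₁ v₂ w₁ w₂ : V)
    (h₁ : v₁ ∈ ZF.treeOf (ZF.forcesOf F K) b) (h₂ : v₂ ∈ ZF.treeOf (ZF.forcesOf F K) b)
    (hb₁ : v₁ ∈ ZF.expand B F k) (hb₂ : v₂ ∈ ZF.expand B F k)
    (hw₁ : w₁ ∉ ZF.expand B F k) (hw₂ : w₂ ∉ ZF.expand B F k)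
    (ha₁ : G.Adj v₁ w₁) (ha₂ : G.Adj v₂ w₂)
    (hconn : ZF.whiteConn G Set.univ (ZF.expand B F k) w₁ w₂) :
    v₁ = v₂ :=
  psd_tree_unique_forcer_general G B K F hF k b v₁ v₂ w₁ w₂ h₁ h₂ hb₁ hb₂ hw₁ hw₂ ha₁ ha₂ hconn
end
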